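/- Let 𝒢 be a finite connected simple graph with killing function κ not identically zero, A a one-form on 𝒢 and s ∈ ℝ. For λ > 0 let r(λ) = det(I − P^{s/√λ})/det(I − P). Then r(λ) → 1 as λ → ∞, and lim_{λ→∞} exp(−λ Log r(λ)) = exp( −(s²/2) [ Tr((P ⊙ A^{⊙2}) G) + Tr((P ⊙ A) G (P ⊙ A) G) ] ), where Log denotes the principal branch of the complex logarithm. (This is the limiting characteristic function of λ^{−1/2} Σ_{γ∈L^λ} ∫_γ A as the loop-soup intensity λ tends to infinity, i.e., the central limit theorem for loop variables.) -/

import Mathlib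

/-!
Put `M z = 1 - P ⊙ exp(i z A)`, an entire family of matrices with `M β = 1 - P^β` for real `β`,
and `g z = Log (det M z / det M 0)`, analytic near `0`. With `β = s/√λ` one has
`λ Log r(λ) = λ g(β) = s² g(β)/β²`, so everything reduces to `g(0) = g'(0) = 0` and the value of
`g''(0)`. By Jacobi's formula `g' = Tr(M⁻¹ M')`, and differentiating `M⁻¹` once more gives
`g''(0) = Tr(G M''(0)) - Tr(G M'(0) G M'(0))` with `M'(0) = -i (P ⊙ A)`, `M''(0) = P ⊙ A^{⊙2}`.
The first-order term `g'(0) = -i Tr(G (P ⊙ A))` vanishes because, with `D = diag(κ + d)`,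
`G (P ⊙ A) = (D (1 - P))⁻¹ (D (P ⊙ A))` is the product of a symmetric and a skew-symmetric matrix.
Invertibility of `D (1 - P) = diag κ + L` (`L` the graph Laplacian) comes from the Dirichlet form:
it vanishes only on constants, which are killed somewhere.
-/

open Matrix Filter Topology Function Complex

theorem Matrix.trace_adjugate_mul {n R : Type*} [Fintype n] [DecidableEq n] [CommRing R]
    (A B : Matrix n n R) : (A.adjugate * B).trace = ∑ i, (A.updateCol i fun k => B k i).det := by
  simp only [← cramer_apply, cramer_eq_adjugate_mulVec]
  simp [Matrix.trace, mul_apply, mulVec, dotProduct]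

section EntrywiseDeriv

variable {𝕜 : Type*} [NontriviallyNormedField 𝕜]

/-- Matrices carry no canonical norm in Mathlib, so derivatives of matrix-valued functions are
taken entrywise. -/
def HasEntrywiseDerivAt {m n : Type*} (M : 𝕜 → Matrix m n 𝕜) (M' : Matrix m n 𝕜) (z : 𝕜) :
    Prop :=
  ∀ i j, HasDerivAt (fun w => M w i j) (M' i j) z

namespace HasEntrywiseDerivAt

variable {n : Type*} {M N : 𝕜 → Matrix n n 𝕜} {M' N' : Matrix n n 𝕜} {z : 𝕜}

section
variable [Fintype n]

theorem mul (hM : HasEntrywiseDerivAt M M' z) (hN : HasEntrywiseDerivAt N N' z) :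
    HasEntrywiseDerivAt (fun w => M w * N w) (M' * N z + M z * N') z := fun i j => by
  simpa only [mul_apply, Matrix.add_apply, ← Finset.sum_add_distrib] using
    HasDerivAt.fun_sum fun k _ => (hM i k).fun_mul (hN k j)

theorem trace (hM : HasEntrywiseDerivAt M M' z) :
    HasDerivAt (fun w => (M w).trace) M'.trace z := by
  simpa only [Matrix.trace, diag] using HasDerivAt.fun_sum fun i _ => hM i i

end

theorem updateRow [DecidableEq n] (hM : HasEntrywiseDerivAt M M' z) (j : n) (v : n → 𝕜) :
    HasEntrywiseDerivAt (fun w => (M w).updateRow j v) (M'.updateRow j 0) z := fun i k => by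
  by_cases h : i = j
  · subst h
    simpa using hasDerivAt_const z (v k)
  · simpa [updateRow_ne h] using hM i k

variable [Fintype n] [DecidableEq n]

-- Jacobi's formula
theorem det (hM : HasEntrywiseDerivAt M M' z) :
    HasDerivAt (fun w => (M w).det) ((M z).adjugate * M').trace z := by
  simp only [det_apply']
  refine (HasDerivAt.fun_sum fun σ _ => (HasDerivAt.fun_finsetProd fun i _ =>
    hM (σ i) i).const_mul (Equiv.Perm.sign σ : 𝕜)).congr_deriv ?_
  rw [trace_adjugate_mul]
  simp only [det_apply', Finset.mul_sum]
  rw [Finset.sum_comm]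
  refine Finset.sum_congr rfl fun i _ => Finset.sum_congr rfl fun σ _ => ?_
  have hcol : ∀ j ∈ Finset.univ.erase i,
      (M z).updateCol i (fun k => M' k i) (σ j) j = M z (σ j) j :=
    fun j hj => updateCol_ne (Finset.ne_of_mem_erase hj)
  rw [← Finset.mul_prod_erase _ _ (Finset.mem_univ i), updateCol_self, Finset.prod_congr rfl hcol,
    smul_eq_mul]
  ring

theorem inv (hM : HasEntrywiseDerivAt M M' z) (hdet : (M z).det ≠ 0) :
    HasEntrywiseDerivAt (fun w => (M w)⁻¹) (-((M z)⁻¹ * M' * (M z)⁻¹)) z := by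
  have hdiff (i j : n) : DifferentiableAt 𝕜 (fun w => (M w)⁻¹ i j) z := by
    simp only [Matrix.inv_def, Matrix.smul_apply, adjugate_apply, Ring.inverse_eq_inv', smul_eq_mul]
    exact (hM.det.differentiableAt.inv hdet).mul (hM.updateRow j _).det.differentiableAt
  set N' : Matrix n n 𝕜 := of fun i j => deriv (fun w => (M w)⁻¹ i j) z
  have hN : HasEntrywiseDerivAt (fun w => (M w)⁻¹) N' z := fun i j => (hdiff i j).hasDerivAt
  have hunit : ∀ᶠ w in 𝓝 z, M w * (M w)⁻¹ = 1 :=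
    (hM.det.continuousAt.eventually_ne hdet).mono fun w hw =>
      mul_nonsing_inv _ (isUnit_iff_ne_zero.mpr hw)
  have hsum : M' * (M z)⁻¹ + M z * N' = 0 := ext fun i j =>
    ((hM.mul hN) i j).unique <| (hasDerivAt_const z ((1 : Matrix n n 𝕜) i j)).congr_of_eventuallyEq
      (hunit.mono fun w hw => congrFun (congrFun hw i) j)
  convert hN using 1
  symm
  calc N' = (M z)⁻¹ * (M z * N') := by
        rw [← Matrix.mul_assoc, nonsing_inv_mul _ (isUnit_iff_ne_zero.mpr hdet), Matrix.one_mul]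
    _ = _ := by
        rw [eq_neg_of_add_eq_zero_right hsum, Matrix.mul_neg, Matrix.mul_assoc]

end HasEntrywiseDerivAt

end EntrywiseDeriv

theorem AnalyticAt.exists_eq_sq_mul {𝕜 : Type*} [NontriviallyNormedField 𝕜] [CompleteSpace 𝕜]
    [CharZero 𝕜] {f : 𝕜 → 𝕜} (hf : AnalyticAt 𝕜 f 0) (h0 : f 0 = 0) (h1 : deriv f 0 = 0) :
    ∃ h : 𝕜 → 𝕜, ContinuousAt h 0 ∧ h 0 = iteratedDeriv 2 f 0 / 2 ∧ ∀ z, f z = z ^ 2 * h z := by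
  have hp := hf.hasFPowerSeriesAt.has_fpower_series_iterate_dslope_fslope 2
  refine ⟨(swap dslope 0)^[2] f, hp.continuousAt, ?_, fun z => ?_⟩
  · rw [← hp.coeff_zero 1, ← FormalMultilinearSeries.coeff,
      FormalMultilinearSeries.coeff_iterate_fslope]
    simp
  · have hvanish : ∀ k < 2, (swap dslope 0)^[k] f 0 = 0 := by
      intro k hk
      interval_cases k
      · exact h0
      · simpa [dslope_same] using h1
    simpa using (pow_sub_smul_iterate_dslope_of_zero 2 hvanish z).symm

section LogDet

variable {n : Type*} [Fintype n] [DecidableEq n] {M M' : ℂ → Matrix n n ℂ} {M'' : Matrix n n ℂ}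

theorem analyticAt_log_det_div (hM : ∀ z, HasEntrywiseDerivAt M (M' z) z)
    (hdet : (M 0).det ≠ 0) : AnalyticAt ℂ (fun z => log ((M z).det / (M 0).det)) 0 := by
  have hF : Differentiable ℂ fun z => (M z).det := fun z => (hM z).det.differentiableAt
  exact ((hF.analyticAt 0).div analyticAt_const hdet).clog (by simp [hdet])

theorem eventually_hasDerivAt_log_det_div (hM : ∀ z, HasEntrywiseDerivAt M (M' z) z)
    (hdet : (M 0).det ≠ 0) :
    ∀ᶠ z in 𝓝 0, HasDerivAt (fun w => log ((M w).det / (M 0).det)) ((M z)⁻¹ * M' z).trace z := by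
  have hcont : ContinuousAt (fun z => (M z).det / (M 0).det) 0 :=
    (hM 0).det.continuousAt.div_const _
  have hslit : ∀ᶠ z in 𝓝 0, (M z).det / (M 0).det ∈ slitPlane :=
    hcont.eventually_mem (isOpen_slitPlane.mem_nhds (by simp [hdet]))
  filter_upwards [(hM 0).det.continuousAt.eventually_ne hdet, hslit] with z hz hzslit
  refine (((hM z).det.div_const _).clog hzslit).congr_deriv ?_
  rw [Matrix.inv_def, Matrix.smul_mul, trace_smul, Ring.inverse_eq_inv', smul_eq_mul]
  field_simp

theorem hasDerivAt_trace_inv_mul (hM : HasEntrywiseDerivAt M (M' 0) 0)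
    (hM' : HasEntrywiseDerivAt M' M'' 0) (hdet : (M 0).det ≠ 0) :
    HasDerivAt (fun z => ((M z)⁻¹ * M' z).trace)
      (((M 0)⁻¹ * M'').trace - ((M 0)⁻¹ * M' 0 * (M 0)⁻¹ * M' 0).trace) 0 := by
  refine ((hM.inv hdet).mul hM').trace.congr_deriv ?_
  rw [trace_add, Matrix.neg_mul, trace_neg]
  ring

theorem exists_log_det_div_eq_sq_mul (hM : ∀ z, HasEntrywiseDerivAt M (M' z) z)
    (hM' : HasEntrywiseDerivAt M' M'' 0) (hdet : (M 0).det ≠ 0)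
    (htr : ((M 0)⁻¹ * M' 0).trace = 0) :
    ∃ h : ℂ → ℂ, ContinuousAt h 0 ∧
      h 0 = (((M 0)⁻¹ * M'').trace - ((M 0)⁻¹ * M' 0 * (M 0)⁻¹ * M' 0).trace) / 2 ∧
      ∀ z, log ((M z).det / (M 0).det) = z ^ 2 * h z := by
  have hderiv := eventually_hasDerivAt_log_det_div hM hdet
  obtain ⟨h, hcont, h0, hfac⟩ := (analyticAt_log_det_div hM hdet).exists_eq_sq_mul
    (by simp [div_self hdet]) (by rw [hderiv.self_of_nhds.deriv, htr])
  have hderiv' : deriv (fun z => log ((M z).det / (M 0).det)) =ᶠ[𝓝 0]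
      fun z => ((M z)⁻¹ * M' z).trace := hderiv.mono fun z hz => hz.deriv
  refine ⟨h, hcont, ?_, hfac⟩
  rw [h0, iteratedDeriv_succ, iteratedDeriv_one, hderiv'.deriv_eq,
    (hasDerivAt_trace_inv_mul (hM 0) hM' hdet).deriv]

end LogDet

section Twist

variable {n : Type*}

/-- `twist P A β` is the paper's `P^β = P ⊙ exp(iβA)`, extended to complex `β`. -/
noncomputable def twist (P A : Matrix n n ℂ) (z : ℂ) : Matrix n n ℂ :=
  of fun x y => P x y * exp (I * z * A x y)

@[simp]
theorem twist_zero (P A : Matrix n n ℂ) : twist P A 0 = P := by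
  ext x y
  simp [twist]

theorem hasEntrywiseDerivAt_twist (P A : Matrix n n ℂ) (z : ℂ) :
    HasEntrywiseDerivAt (twist P A) (I • twist (P ⊙ A) A z) z := fun x y => by
  have h : HasDerivAt (fun w => I * w * A x y) (I * A x y) z := by
    simpa using ((hasDerivAt_id z).const_mul I).mul_const (A x y)
  refine (h.cexp.const_mul (P x y)).congr_deriv ?_
  simp only [twist, Matrix.smul_apply, of_apply, hadamard_apply, smul_eq_mul]
  ring

theorem hasEntrywiseDerivAt_one_sub_twist [DecidableEq n] (P A : Matrix n n ℂ) (z : ℂ) :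
    HasEntrywiseDerivAt (fun w => 1 - twist P A w) (-(I • twist (P ⊙ A) A z)) z := fun x y => by
  simpa using ((hasEntrywiseDerivAt_twist P A z) x y).const_sub ((1 : Matrix n n ℂ) x y)

variable [Fintype n] [DecidableEq n]

theorem tendsto_det_one_sub_twist_div {P : Matrix n n ℂ} (A : Matrix n n ℂ)
    (hdet : (1 - P).det ≠ 0) :
    Tendsto (fun z => (1 - twist P A z).det / (1 - P).det) (𝓝 0) (𝓝 1) := by
  simpa [div_self hdet] using
    (hasEntrywiseDerivAt_one_sub_twist P A 0).det.continuousAt.tendsto.div_const (1 - P).det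

theorem exists_log_det_one_sub_twist_eq_sq_mul {P A G : Matrix n n ℂ} (hG : G * (1 - P) = 1)
    (htr : (G * (P ⊙ A)).trace = 0) :
    ∃ h : ℂ → ℂ, ContinuousAt h 0 ∧
      h 0 = ((P ⊙ (A ⊙ A) * G).trace + (P ⊙ A * G * (P ⊙ A) * G).trace) / 2 ∧
      ∀ z, log ((1 - twist P A z).det / (1 - P).det) = z ^ 2 * h z := by
  have hM' : HasEntrywiseDerivAt (fun z => -(I • twist (P ⊙ A) A z)) (P ⊙ (A ⊙ A)) 0 :=
    fun x y => by
      refine ((hasEntrywiseDerivAt_twist (P ⊙ A) A 0 x y).const_mul I).neg.congr_deriv ?_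
      simp only [twist_zero, Matrix.smul_apply, hadamard_apply, smul_eq_mul]
      ring_nf
      simp [I_sq]
  have hinv : (1 - P)⁻¹ = G := inv_eq_left_inv hG
  have hdet : (1 - P).det ≠ 0 := isUnit_iff_ne_zero.mp (isUnit_det_of_left_inverse hG)
  obtain ⟨h, hcont, h0, hfac⟩ := exists_log_det_div_eq_sq_mul
    (hasEntrywiseDerivAt_one_sub_twist P A) hM' (by simpa using hdet) (by simp [hinv, htr])
  refine ⟨h, hcont, ?_, by simpa using hfac⟩
  rw [h0]
  simp only [twist_zero, hinv, Matrix.mul_neg, Matrix.neg_mul, Matrix.mul_smul, Matrix.smul_mul,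
    trace_neg, trace_smul, smul_eq_mul]
  rw [trace_mul_comm G, show G * (P ⊙ A) * G * (P ⊙ A) = G * (P ⊙ A * G * (P ⊙ A)) by
    simp only [Matrix.mul_assoc], trace_mul_comm G]
  simp only [mul_neg, neg_neg, ← mul_assoc, I_mul_I]
  ring

end Twist

theorem Matrix.trace_mul_eq_zero_of_isSymm_of_transpose_eq_neg {n R : Type*} [Fintype n]
    [CommRing R] [IsAddTorsionFree R] {S K : Matrix n n R} (hS : S.IsSymm) (hK : Kᵀ = -K) :
    (S * K).trace = 0 := by
  have h := trace_transpose (S * K)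
  rw [transpose_mul, hK, hS.eq, Matrix.neg_mul, trace_neg, trace_mul_comm] at h
  exact self_eq_neg.mp h.symm

namespace SimpleGraph

variable {V : Type*} [Fintype V] {G : SimpleGraph V} [DecidableRel G.Adj] {κ : V → ℝ}

theorem Connected.killing_add_degree_pos (hconn : G.Connected) (hκnn : ∀ x, 0 ≤ κ x)
    (hκ : κ ≠ 0) (x : V) : 0 < κ x + G.degree x := by
  obtain ⟨x₀, hx₀⟩ := Function.ne_iff.mp hκ
  rcases (hκnn x).lt_or_eq with h | h
  · positivity
  · have hne : x ≠ x₀ := by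
      rintro rfl
      exact hx₀ h.symm
    rw [← h, zero_add]
    exact_mod_cast (hconn.preconnected x x₀).degree_pos_left hne

variable [DecidableEq V]

theorem Connected.det_diagonal_add_lapMatrix_ne_zero (hconn : G.Connected)
    (hκnn : ∀ x, 0 ≤ κ x) (hκ : κ ≠ 0) : (diagonal κ + G.lapMatrix ℝ).det ≠ 0 := by
  intro h
  obtain ⟨v, hv, hker⟩ := exists_mulVec_eq_zero_iff.mpr h
  have hform : ∑ x, κ x * v x ^ 2 + toLinearMap₂' ℝ (G.lapMatrix ℝ) v v = 0 := by
    have := congrArg (dotProduct v) hker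
    simp only [add_mulVec, dotProduct_add, dotProduct_zero] at this
    rw [toLinearMap₂'_apply', ← this]
    simp only [dotProduct, mulVec_diagonal]
    congr 1
    exact Finset.sum_congr rfl fun x _ => by ring
  have hκv : 0 ≤ ∑ x, κ x * v x ^ 2 :=
    Finset.sum_nonneg fun x _ => mul_nonneg (hκnn x) (sq_nonneg _)
  have hlap : 0 ≤ toLinearMap₂' ℝ (G.lapMatrix ℝ) v v := by
    rw [lapMatrix_toLinearMap₂']
    positivity
  have hconst : ∀ x y, v x = v y := fun x y =>
    (lapMatrix_toLinearMap₂'_apply'_eq_zero_iff_forall_reachable G v).mp (by linarith) x y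
      (hconn.preconnected x y)
  obtain ⟨x₀, hx₀⟩ := Function.ne_iff.mp hκ
  have hx₀v : κ x₀ * v x₀ ^ 2 = 0 :=
    (Finset.sum_eq_zero_iff_of_nonneg fun x _ => mul_nonneg (hκnn x) (sq_nonneg (v x))).mp
      (by linarith) x₀ (Finset.mem_univ _)
  have hv₀ : v x₀ = 0 :=
    pow_eq_zero_iff two_ne_zero |>.mp ((mul_eq_zero.mp hx₀v).resolve_left hx₀)
  exact hv (funext fun x => (hconst x x₀).trans hv₀)

variable {P : Matrix V V ℝ}

theorem diagonal_mul_eq_adjMatrix (hpos : ∀ x, 0 < κ x + G.degree x)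
    (hP : ∀ x y, P x y = if G.Adj x y then 1 / (κ x + G.degree x) else 0) :
    diagonal (fun x => κ x + G.degree x) * P = G.adjMatrix ℝ := by
  ext x y
  rw [diagonal_mul, hP, adjMatrix_apply]
  split_ifs
  · field_simp [(hpos x).ne']
  · simp

theorem diagonal_mul_one_sub_eq (hpos : ∀ x, 0 < κ x + G.degree x)
    (hP : ∀ x y, P x y = if G.Adj x y then 1 / (κ x + G.degree x) else 0) :
    diagonal (fun x => κ x + G.degree x) * (1 - P) = diagonal κ + G.lapMatrix ℝ := by
  rw [Matrix.mul_sub, Matrix.mul_one, diagonal_mul_eq_adjMatrix hpos hP, lapMatrix, degMatrix,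
    ← add_sub_assoc, diagonal_add]

theorem Connected.det_one_sub_ne_zero (hconn : G.Connected) (hκnn : ∀ x, 0 ≤ κ x) (hκ : κ ≠ 0)
    (hP : ∀ x y, P x y = if G.Adj x y then 1 / (κ x + G.degree x) else 0) : (1 - P).det ≠ 0 := by
  have h := hconn.det_diagonal_add_lapMatrix_ne_zero hκnn hκ
  rw [← diagonal_mul_one_sub_eq (hconn.killing_add_degree_pos hκnn hκ) hP, det_mul] at h
  exact right_ne_zero_of_mul h

theorem trace_inv_one_sub_mul_hadamard_eq_zero (hpos : ∀ x, 0 < κ x + G.degree x)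
    (hP : ∀ x y, P x y = if G.Adj x y then 1 / (κ x + G.degree x) else 0) {A : Matrix V V ℝ}
    (hA : ∀ x y, A x y = -A y x) :
    ((1 - P)⁻¹ * (P ⊙ A)).trace = 0 := by
  set D := diagonal fun x => κ x + G.degree x
  have hD : IsUnit D.det := by
    rw [det_diagonal]
    exact (Finset.prod_pos fun x _ => hpos x).ne'.isUnit
  have hK : D * (P ⊙ A) = G.adjMatrix ℝ ⊙ A := by
    rw [← diagonal_mul_eq_adjMatrix hpos hP]
    ext x y
    simp [D, diagonal_mul, mul_assoc]
  have hskew : (G.adjMatrix ℝ ⊙ A)ᵀ = -(G.adjMatrix ℝ ⊙ A) := by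
    ext x y
    simp [hA y x, G.adj_comm]
  rw [show (1 - P)⁻¹ * (P ⊙ A) = (D * (1 - P))⁻¹ * (D * (P ⊙ A)) by
    rw [Matrix.mul_inv_rev, Matrix.mul_assoc, ← Matrix.mul_assoc D⁻¹, nonsing_inv_mul _ hD,
      Matrix.one_mul], diagonal_mul_one_sub_eq hpos hP, hK]
  exact trace_mul_eq_zero_of_isSymm_of_transpose_eq_neg
    ((isSymm_diagonal κ).add (G.isSymm_lapMatrix ℝ)).inv hskew

end SimpleGraph

theorem Matrix.hadamard_map {m n α β F : Type*} [Mul α] [Mul β] [FunLike F α β]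
    [MulHomClass F α β] (f : F) (A B : Matrix m n α) : (A ⊙ B).map f = A.map f ⊙ B.map f := by
  ext
  simp

section Casts

variable {n : Type*} [DecidableEq n]

theorem Matrix.map_one_sub {R S : Type*} [Ring R] [Ring S] (f : R →+* S) (P : Matrix n n R) :
    (1 - P).map f = 1 - P.map f := by
  rw [Matrix.map_sub, Matrix.map_one] <;> simp

variable [Fintype n]

theorem det_one_sub_map_ofReal (P : Matrix n n ℝ) :
    (1 - P.map ofRealHom).det = ((1 - P).det : ℂ) := by
  rw [← map_one_sub]
  exact (ofRealHom.map_det (1 - P)).symm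

theorem exists_log_det_one_sub_twist_ofReal_eq_sq_mul {P A G : Matrix n n ℝ}
    (hG : G * (1 - P) = 1) (htr : (G * (P ⊙ A)).trace = 0) :
    ∃ h : ℂ → ℂ, ContinuousAt h 0 ∧
      h 0 = (((P ⊙ (A ⊙ A) * G).trace + (P ⊙ A * G * (P ⊙ A) * G).trace : ℝ) : ℂ) / 2 ∧
      ∀ z, log ((1 - twist (P.map ofRealHom) (A.map ofRealHom) z).det /
        (1 - P.map ofRealHom).det) = z ^ 2 * h z := by
  have hGc : G.map ofRealHom * (1 - P.map ofRealHom) = 1 := by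
    simpa [map_one_sub] using congrArg ofRealHom.mapMatrix hG
  have htrc : (G.map ofRealHom * (P.map ofRealHom ⊙ A.map ofRealHom)).trace = 0 := by
    rw [← hadamard_map, ← Matrix.map_mul, ← AddMonoidHom.map_trace, htr, map_zero]
  obtain ⟨h, hcont, h0, hfac⟩ := exists_log_det_one_sub_twist_eq_sq_mul hGc htrc
  refine ⟨h, hcont, ?_, hfac⟩
  rw [h0]
  simp only [← hadamard_map, ← Matrix.map_mul, ← AddMonoidHom.map_trace]
  push_cast
  rfl

end Casts

theorem tendsto_ofReal_div_sqrt_atTop (s : ℝ) :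
    Tendsto (fun lam : ℝ => ((s / √lam : ℝ) : ℂ)) atTop (𝓝 0) := by
  have := (continuous_ofReal.tendsto 0).comp
    (tendsto_const_nhds (x := s) |>.div_atTop Real.tendsto_sqrt_atTop)
  rwa [ofReal_zero] at this

theorem tendsto_mul_sq_div_sqrt_mul_atTop {h : ℂ → ℂ} (s : ℝ) (hcont : ContinuousAt h 0) :
    Tendsto (fun lam : ℝ => (lam : ℂ) * (((s / √lam : ℝ) : ℂ) ^ 2 * h (s / √lam : ℝ))) atTop
      (𝓝 (s ^ 2 * h 0)) := by
  refine ((hcont.tendsto.comp (tendsto_ofReal_div_sqrt_atTop s)).const_mul _).congr' ?_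
  filter_upwards [eventually_gt_atTop 0] with lam hlam
  have hsq : (lam : ℂ) * ((s / √lam : ℝ) : ℂ) ^ 2 = s ^ 2 := by
    rw [← ofReal_pow, ← ofReal_mul, div_pow, Real.sq_sqrt hlam.le,
      mul_div_cancel₀ _ hlam.ne', ofReal_pow]
  rw [← mul_assoc, hsq]
  rfl

theorem clt_one_form_general
    {V : Type*} [Fintype V] [DecidableEq V]
    (G : SimpleGraph V) [DecidableRel G.Adj] (hconn : G.Connected)
    (κ : V → ℝ) (hκnn : ∀ x, 0 ≤ κ x) (hκ : κ ≠ 0)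
    (P : Matrix V V ℝ)
    (hP : ∀ x y, P x y = if G.Adj x y then 1 / (κ x + (G.degree x : ℝ)) else 0)
    (Gr : Matrix V V ℝ) (hGr : Gr = (1 - P)⁻¹)
    (A : Matrix V V ℝ)
    (hAskew : ∀ x y, A x y = - A y x)
    (Pβ : ℝ → Matrix V V ℂ)
    (hPβ : ∀ β x y, Pβ β x y =
      if G.Adj x y then Complex.exp (Complex.I * β * A x y) / ((κ x + (G.degree x : ℝ) : ℝ) : ℂ)
      else 0)
    (s : ℝ)
    (r : ℝ → ℂ)
    (hr : ∀ lam : ℝ, r lam =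
      Matrix.det (1 - Pβ (s / Real.sqrt lam)) / ((Matrix.det (1 - P) : ℝ) : ℂ)) :
    Tendsto r atTop (nhds 1) ∧
    Tendsto (fun lam : ℝ => Complex.exp (-(lam : ℂ) * Complex.log (r lam))) atTop
      (nhds (Complex.exp
        ((-(s ^ 2 / 2) *
          (Matrix.trace ((P ⊙ (A ⊙ A)) * Gr) +
            Matrix.trace ((P ⊙ A) * Gr * (P ⊙ A) * Gr)) : ℝ) : ℂ))) := by
  have hpos := hconn.killing_add_degree_pos hκnn hκ
  have hdet := hconn.det_one_sub_ne_zero hκnn hκ hP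
  have hdetc : (1 - P.map ofRealHom).det ≠ 0 := by
    rw [det_one_sub_map_ofReal]
    exact ofReal_ne_zero.mpr hdet
  obtain ⟨h, hcont, h0, hfac⟩ := exists_log_det_one_sub_twist_ofReal_eq_sq_mul
    (hGr ▸ nonsing_inv_mul _ (isUnit_iff_ne_zero.mpr hdet))
    (hGr ▸ SimpleGraph.trace_inv_one_sub_mul_hadamard_eq_zero hpos hP hAskew)
  have hr' (lam : ℝ) : r lam = (1 - twist (P.map ofRealHom) (A.map ofRealHom) (s / √lam : ℝ)).det /
      (1 - P.map ofRealHom).det := by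
    rw [hr, det_one_sub_map_ofReal]
    congr 3
    ext x y
    rw [hPβ, twist, of_apply, map_apply, map_apply, hP]
    split_ifs <;> simp [div_eq_inv_mul]
  refine ⟨?_, ?_⟩
  · rw [funext hr']
    exact (tendsto_det_one_sub_twist_div _ hdetc).comp (tendsto_ofReal_div_sqrt_atTop s)
  · have hlim := (continuous_exp.tendsto _).comp (tendsto_mul_sq_div_sqrt_mul_atTop s hcont).neg
    convert hlim using 2 with lam
    · simp [hr', hfac]
    · rw [h0]
      push_cast
      congr 1
      ring

/-- CLT for loop variables: with `r(λ) = det(I - P^{s/√λ})/det(I - P)`,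
`r(λ) → 1` and `exp(-λ Log r(λ)) →
  exp(-(s²/2)[Tr((P ⊙ A^{⊙2})G) + Tr((P ⊙ A)G(P ⊙ A)G)])` as `λ → ∞`. -/
theorem clt_one_form
    {V : Type*} [Fintype V] [DecidableEq V]
    (G : SimpleGraph V) [DecidableRel G.Adj] (hconn : G.Connected)
    (κ : V → ℝ) (hκnn : ∀ x, 0 ≤ κ x) (hκ : κ ≠ 0)
    (P : Matrix V V ℝ)
    (hP : ∀ x y, P x y = if G.Adj x y then 1 / (κ x + (G.degree x : ℝ)) else 0)
    (Gr : Matrix V V ℝ) (hGr : Gr = (1 - P)⁻¹)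
    (A : Matrix V V ℝ)
    (hAskew : ∀ x y, A x y = - A y x)
    (hAsupp : ∀ x y, ¬ G.Adj x y → A x y = 0)
    (Pβ : ℝ → Matrix V V ℂ)
    (hPβ : ∀ β x y, Pβ β x y =
      if G.Adj x y then Complex.exp (Complex.I * β * A x y) / ((κ x + (G.degree x : ℝ) : ℝ) : ℂ)
      else 0)
    (s : ℝ)
    (r : ℝ → ℂ)
    (hr : ∀ lam : ℝ, r lam =
      Matrix.det (1 - Pβ (s / Real.sqrt lam)) / ((Matrix.det (1 - P) : ℝ) : ℂ)) :
    Tendsto r atTop (nhds 1) ∧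
    Tendsto (fun lam : ℝ => Complex.exp (-(lam : ℂ) * Complex.log (r lam))) atTop
      (nhds (Complex.exp
        ((-(s ^ 2 / 2) *
          (Matrix.trace ((P ⊙ (A ⊙ A)) * Gr) +
            Matrix.trace ((P ⊙ A) * Gr * (P ⊙ A) * Gr)) : ℝ) : ℂ))) :=
  clt_one_form_general G hconn κ hκnn hκ P hP Gr hGr A hAskew Pβ hPβ s r hr
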